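/- arXiv:1811.02206 — 8 statements merged into one kernel-verified Lean document; each statement's English description precedes it below -/
import Mathlib

section
/- Let X be a nonempty compact metrizable totally disconnected space and let T : X → X be a homeomorphism with no periodic points, i.e. Tⁿ(x) ≠ x for every x ∈ X and every integer n ≥ 1. Then for every integer n ≥ 1 there exists a clopen set F ⊆ X such that the sets F, T⁻¹(F), …, T⁻⁽ⁿ⁻¹⁾(F) are pairwise disjoint and F ∪ T⁻¹(F) ∪ … ∪ T⁻⁽²ⁿ⁻²⁾(F) = X. -/
/-!
Separating a non-periodic point `x` from `Tᵏ x` (`0 < k < n`) by clopen sets gives a clopen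
neighbourhood of `x` that meets none of its first `n - 1` translates. Finitely many such sets cover
`X`; adding them one at a time, each with the two-sided `n`-window of the marker built so far
removed, yields a clopen `F` disjoint from `T⁻ᵏ F` for `0 < k < n` whose window
`⋃_{|k| < n} Tᵏ F` is all of `X`. The marker is `Tⁿ⁻¹ F`, whose translates
`T⁻ⁱ (Tⁿ⁻¹ F)`, `i < 2n - 1`, are exactly that window.
-/

open Function Set

section

variable {X : Type*}

def DisjointIterates (f : X → X) (n : ℕ) (F : Set X) : Prop :=
  ∀ k, 0 < k → k < n → Disjoint F (f^[k] ⁻¹' F)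

namespace DisjointIterates

variable {f : X → X} {n : ℕ} {F : Set X}

theorem mono {G : Set X} (hG : DisjointIterates f n G) (hFG : F ⊆ G) : DisjointIterates f n F :=
  fun k hk hkn => (hG k hk hkn).mono hFG (preimage_mono hFG)

theorem preimage_of_commute {g : X → X} (hF : DisjointIterates f n F) (hfg : Function.Commute f g) :
    DisjointIterates f n (g ⁻¹' F) := by
  intro k hk hkn
  rw [← preimage_comp, ← (hfg.iterate_left k).comp_eq, preimage_comp]
  exact (hF k hk hkn).preimage g

theorem disjoint_preimage_iterate (hF : DisjointIterates f n F) {i j : ℕ} (hi : i < n)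
    (hj : j < n) (hij : i ≠ j) : Disjoint (f^[i] ⁻¹' F) (f^[j] ⁻¹' F) := by
  wlog hlt : i < j generalizing i j
  · exact (this hj hi hij.symm (by omega)).symm
  have hji : j = (j - i) + i := by omega
  rw [hji, iterate_add, preimage_comp]
  exact (hF (j - i) (by omega) (by omega)).preimage _

end DisjointIterates

theorem exists_isClopen_mem_disjointIterates [TopologicalSpace X] [TotallySeparatedSpace X]
    {f : X → X} (hf : Continuous f) {x : X} (hx : ∀ k, 0 < k → f^[k] x ≠ x) (n : ℕ) :
    ∃ U : Set X, IsClopen U ∧ x ∈ U ∧ DisjointIterates f n U := by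
  have separate : ∀ k : ℕ, ∃ W : Set X, IsClopen W ∧ x ∈ W ∧ f^[k + 1] x ∉ W := fun k =>
    exists_isClopen_of_totally_separated (hx (k + 1) k.succ_pos).symm
  choose W hW_clopen hxW hW_sep using separate
  refine ⟨⋂ k ∈ Finset.range n, W k \ f^[k + 1] ⁻¹' W k,
    isClopen_biInter_finset fun k _ => (hW_clopen k).diff ((hW_clopen k).preimage (hf.iterate _)),
    mem_iInter₂.2 fun k _ => ⟨hxW k, hW_sep k⟩, ?_⟩
  rintro (_ | k) hk hkn
  · omega
  rw [Set.disjoint_left]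
  intro y hy hfy
  have hk : k ∈ Finset.range n := Finset.mem_range.2 (by omega)
  exact (mem_iInter₂.1 hy k hk).2 (mem_iInter₂.1 hfy k hk).1

section OrbitWindow

variable [TopologicalSpace X] (T : X ≃ₜ X) (n : ℕ)

def orbitWindow (A : Set X) : Set X :=
  ⋃ k < n, (T^[k] ⁻¹' A ∪ T.symm^[k] ⁻¹' A)

variable {T n}

theorem mem_orbitWindow {A : Set X} {x : X} :
    x ∈ orbitWindow T n A ↔ ∃ k < n, T^[k] x ∈ A ∨ T.symm^[k] x ∈ A := by
  simp [orbitWindow]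

theorem orbitWindow_mono {A B : Set X} (h : A ⊆ B) : orbitWindow T n A ⊆ orbitWindow T n B :=
  biUnion_mono subset_rfl fun _ _ => union_subset_union (preimage_mono h) (preimage_mono h)

theorem subset_orbitWindow (hn : 0 < n) (A : Set X) : A ⊆ orbitWindow T n A :=
  fun _ hx => mem_orbitWindow.2 ⟨0, hn, Or.inl hx⟩

theorem IsClopen.orbitWindow {A : Set X} (hA : IsClopen A) : IsClopen (orbitWindow T n A) :=
  (finite_lt_nat n).isClopen_biUnion fun k _ =>
    (hA.preimage (T.continuous.iterate k)).union (hA.preimage (T.symm.continuous.iterate k))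

theorem DisjointIterates.union_diff_orbitWindow {F U : Set X} (hF : DisjointIterates T n F)
    (hU : DisjointIterates T n U) : DisjointIterates T n (F ∪ (U \ orbitWindow T n F)) := by
  intro k hk hkn
  simp only [preimage_union, disjoint_union_left, disjoint_union_right]
  refine ⟨⟨hF k hk hkn, ?_⟩, ?_, (hU.mono sdiff_subset) k hk hkn⟩
  · exact Set.disjoint_left.2 fun y hy hTy => hy.2 (mem_orbitWindow.2 ⟨k, hkn, Or.inl hTy⟩)
  · refine Set.disjoint_left.2 fun y hy hTy => hTy.2 (mem_orbitWindow.2 ⟨k, hkn, Or.inr ?_⟩)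
    rwa [LeftInverse.iterate T.symm_apply_apply k y]

theorem exists_isClopen_disjointIterates_subset_orbitWindow (hn : 0 < n) {ι : Type*}
    {U : ι → Set X} (hU_clopen : ∀ i, IsClopen (U i)) (hU : ∀ i, DisjointIterates T n (U i))
    (s : Finset ι) :
    ∃ F : Set X, IsClopen F ∧ DisjointIterates T n F ∧ ⋃ i ∈ s, U i ⊆ orbitWindow T n F := by
  classical
  induction s using Finset.induction_on with
  | empty => exact ⟨∅, isClopen_empty, fun _ _ _ => disjoint_bot_left, by simp⟩
  | insert i s _ ih =>
    obtain ⟨F, hF_clopen, hF, hsF⟩ := ih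
    refine ⟨F ∪ (U i \ orbitWindow T n F),
      hF_clopen.union ((hU_clopen i).diff hF_clopen.orbitWindow),
      hF.union_diff_orbitWindow (hU i), ?_⟩
    rw [Finset.set_biUnion_insert]
    refine union_subset (fun x hx => ?_) (hsF.trans (orbitWindow_mono subset_union_left))
    by_cases hxF : x ∈ orbitWindow T n F
    · exact orbitWindow_mono subset_union_left hxF
    · exact subset_orbitWindow hn _ (Or.inr ⟨hx, hxF⟩)

theorem iUnion_preimage_iterate_shift_eq_univ {F : Set X} (hF : orbitWindow T n F = univ) :
    ⋃ i < 2 * n - 1, T^[i] ⁻¹' (T.symm^[n - 1] ⁻¹' F) = univ := by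
  have hcancel : ∀ m y, T.symm^[m] (T^[m] y) = y :=
    LeftInverse.iterate T.symm_apply_apply
  refine eq_univ_of_forall fun x => mem_iUnion₂.2 ?_
  obtain ⟨k, hkn, hk | hk⟩ := mem_orbitWindow.1 (hF ▸ mem_univ x)
  · refine ⟨n - 1 + k, by omega, ?_⟩
    rwa [mem_preimage, mem_preimage, iterate_add_apply, hcancel]
  · refine ⟨n - 1 - k, by omega, ?_⟩
    have hsplit : n - 1 = k + (n - 1 - k) := by omega
    rwa [mem_preimage, mem_preimage, hsplit, iterate_add_apply, Nat.add_sub_cancel_left, hcancel]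

end OrbitWindow

end

theorem krieger_marker_lemma_general
    (X : Type*) [TopologicalSpace X] [CompactSpace X] [TopologicalSpace.MetrizableSpace X]
    [TotallyDisconnectedSpace X]
    (T : X ≃ₜ X)
    (h_aper : ∀ (x : X) (n : ℕ), 1 ≤ n → (T : X → X)^[n] x ≠ x)
    (n : ℕ) (hn : 1 ≤ n) :
    ∃ F : Set X, IsClopen F ∧
      (∀ i j, i < n → j < n → i ≠ j →
        Disjoint ((T : X → X)^[i] ⁻¹' F) ((T : X → X)^[j] ⁻¹' F)) ∧
      (⋃ i < 2 * n - 1, (T : X → X)^[i] ⁻¹' F) = Set.univ := by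
  choose U hU_clopen hxU hU using fun x =>
    exists_isClopen_mem_disjointIterates T.continuous (fun k hk => h_aper x k hk) n
  obtain ⟨t, ht⟩ := isCompact_univ.elim_finite_subcover U (fun x => (hU_clopen x).isOpen)
    fun x _ => mem_iUnion.2 ⟨x, hxU x⟩
  obtain ⟨F, hF_clopen, hF, htF⟩ :=
    exists_isClopen_disjointIterates_subset_orbitWindow hn hU_clopen hU t
  have hcomm : Function.Commute T T.symm := fun x => by simp
  exact ⟨T.symm^[n - 1] ⁻¹' F, hF_clopen.preimage (T.symm.continuous.iterate _),
    fun i j hi hj hij => (hF.preimage_of_commute (hcomm.iterate_right _)).disjoint_preimage_iterate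
      hi hj hij,
    iUnion_preimage_iterate_shift_eq_univ (univ_subset_iff.1 (ht.trans htF))⟩

/-- Krieger's Marker Lemma (aperiodic, invertible case): in an aperiodic
zero-dimensional system `(X, T)`, for every `n ≥ 1` there is a clopen `n`-marker
`F` whose preimages `F, T⁻¹F, …, T⁻⁽ⁿ⁻¹⁾F` are pairwise disjoint and with
`F ∪ T⁻¹F ∪ … ∪ T⁻⁽²ⁿ⁻²⁾F = X`. -/
theorem krieger_marker_lemma
    (X : Type*) [TopologicalSpace X] [CompactSpace X] [TopologicalSpace.MetrizableSpace X]
    [TotallyDisconnectedSpace X] [Nonempty X]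
    (T : X ≃ₜ X)
    (h_aper : ∀ (x : X) (n : ℕ), 1 ≤ n → (T : X → X)^[n] x ≠ x)
    (n : ℕ) (hn : 1 ≤ n) :
    ∃ F : Set X, IsClopen F ∧
      (∀ i j, i < n → j < n → i ≠ j →
        Disjoint ((T : X → X)^[i] ⁻¹' F) ((T : X → X)^[j] ⁻¹' F)) ∧
      (⋃ i < 2 * n - 1, (T : X → X)^[i] ⁻¹' F) = Set.univ :=
  krieger_marker_lemma_general X T h_aper n hn
end

section
/- Let E and C be nonempty compact metrizable totally disconnected topological spaces. For each k ∈ ℕ let ψ_k : E × C → ℝ be a nonnegative upper semicontinuous function. Assume that for every e ∈ E the set {t ∈ C : ψ_k(e, t) = 0 for all k ∈ ℕ} is dense in C. Then there exists a continuous map s : E → C such that ψ_k(e, s(e)) = 0 for every e ∈ E and every k ∈ ℕ. -/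
/-!
By the Baire category theorem in the complete metric space `C(E, C)`, it suffices to show that
for each `k` and `n` the continuous maps whose graph lies in the open set `{ψ k < 1 / (n + 1)}`
form an open dense set. Openness holds because `E` is compact. For density, every point of `E`
has a neighbourhood over which a single value of `C`, close to the given map, lies in that set;
since `E` is zero-dimensional, finitely many of these neighbourhoods can be refined to a clopen
partition, and the resulting locally constant map is the required approximation.
-/

open Set Topology

theorem exists_isLocallyConstant_forall_of_isOpen {X Y : Type*} [TopologicalSpace X]
    [CompactSpace X] [T2Space X] [TotallyDisconnectedSpace X] {R : X → Y → Prop}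
    (hR : ∀ y, IsOpen {x | R x y}) (h : ∀ x, ∃ y, R x y) :
    ∃ g : X → Y, IsLocallyConstant g ∧ ∀ x, R x (g x) := by
  have hcover : TopologicalSpace.IsOpenCover
      fun y ↦ (⟨{x | R x y}, hR y⟩ : TopologicalSpace.Opens X) :=
    .of_sets hR (iUnion_eq_univ_iff.mpr h)
  obtain ⟨n, W, hW, hWcover, hWdisj⟩ := hcover.exists_finite_nonempty_disjoint_clopen_cover
  choose y hy using fun j ↦ (hW j).2
  choose piece hpiece using fun x ↦ mem_iUnion.mp (hWcover (mem_univ x))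
  have hfiber (j : Fin n) : piece ⁻¹' {j} = W j := by
    ext x
    refine ⟨fun hx ↦ hx ▸ hpiece x, fun hx ↦ hWdisj.eq ?_⟩
    rw [Function.onFun, ← TopologicalSpace.Clopens.coe_disjoint, not_disjoint_iff]
    exact ⟨x, hpiece x, hx⟩
  refine ⟨y ∘ piece, ?_, fun x ↦ hy _ (hpiece x)⟩
  exact (IsLocallyConstant.iff_isOpen_fiber.mpr fun j ↦ hfiber j ▸ (W j).isOpen).comp y

namespace ContinuousMap

variable {X Y : Type*} [TopologicalSpace X] [CompactSpace X] {U : Set (X × Y)}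

theorem isOpen_setOf_forall_mk_mem [LocallyCompactSpace X] [TopologicalSpace Y] (hU : IsOpen U) :
    IsOpen {f : C(X, Y) | ∀ x, (x, f x) ∈ U} := by
  have hgraph : Continuous fun f : C(X, Y) ↦ (ContinuousMap.id X).prodMk f :=
    continuous_of_continuous_uncurry _ (continuous_snd.prodMk continuous_eval)
  simpa [MapsTo] using (isOpen_setOfPred_mapsTo isCompact_univ hU).preimage hgraph

theorem dense_setOf_forall_mk_mem [T2Space X] [TotallyDisconnectedSpace X] [PseudoMetricSpace Y]
    (hU : IsOpen U) (hfiber : ∀ x, Dense {y | (x, y) ∈ U}) :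
    Dense {f : C(X, Y) | ∀ x, (x, f x) ∈ U} := by
  rw [Metric.dense_iff]
  intro f ε hε
  obtain ⟨g, hg, hgU⟩ := exists_isLocallyConstant_forall_of_isOpen
    (R := fun x y ↦ (x, y) ∈ U ∧ dist (f x) y < ε)
    (fun y ↦ (hU.preimage (Continuous.prodMk_left y)).inter (isOpen_lt (f.continuous.dist continuous_const) continuous_const))
    (fun x ↦ (hfiber x).exists_dist_lt (f x) hε)
  refine ⟨⟨g, hg.continuous⟩, ?_, fun x ↦ (hgU x).1⟩
  rw [Metric.mem_ball, dist_comm, dist_lt_iff hε]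
  exact fun x ↦ (hgU x).2

end ContinuousMap

theorem continuous_selector_abstract_general
    (E C : Type*)
    [TopologicalSpace E] [CompactSpace E] [TopologicalSpace.MetrizableSpace E]
    [TotallyDisconnectedSpace E]
    [TopologicalSpace C] [CompactSpace C] [TopologicalSpace.MetrizableSpace C]
    [Nonempty C]
    (ψ : ℕ → E × C → ℝ)
    (h_nonneg : ∀ k p, 0 ≤ ψ k p)
    (h_usc : ∀ k, UpperSemicontinuous (ψ k))
    (h_dense : ∀ e : E, Dense {t : C | ∀ k, ψ k (e, t) = 0}) :
    ∃ s : E → C, Continuous s ∧ ∀ (e : E) (k : ℕ), ψ k (e, s e) = 0 := by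
  let := TopologicalSpace.metrizableSpaceMetric C
  let U (kn : ℕ × ℕ) : Set (E × C) := {p | ψ kn.1 p < 1 / ((kn.2 : ℝ) + 1)}
  have hU_dense (kn : ℕ × ℕ) (e : E) : Dense {t | (e, t) ∈ U kn} :=
    (h_dense e).mono fun t ht ↦ by simp only [U, mem_ofPred_eq, ht kn.1]; positivity
  have hU_open (kn : ℕ × ℕ) : IsOpen (U kn) := (h_usc kn.1).isOpen_preimage _
  have : Nonempty C(E, C) := ⟨.const E (Classical.arbitrary C)⟩
  obtain ⟨s, hs⟩ := (dense_iInter_of_isOpen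
    (fun kn ↦ ContinuousMap.isOpen_setOf_forall_mk_mem (hU_open kn))
    (fun kn ↦ ContinuousMap.dense_setOf_forall_mk_mem (hU_open kn) (hU_dense kn))).nonempty
  refine ⟨s, s.continuous, fun e k ↦ le_antisymm ?_ (h_nonneg k _)⟩
  exact ge_of_tendsto' tendsto_one_div_add_atTop_nhds_zero_nat
    fun n ↦ (mem_iInter.mp hs (k, n) e).le

/-- Abstract continuous selector lemma: if `E` and `C` are nonempty compact
zero-dimensional metrizable spaces, `ψ_k : E × C → ℝ` are nonnegative upper
semicontinuous functions and for every `e ∈ E` the set of parameters `t ∈ C`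
annihilating all `ψ_k(e, ·)` is dense, then there is a continuous selector
`s : E → C` with `ψ_k(e, s(e)) = 0` for all `e` and `k`. -/
theorem continuous_selector_abstract
    (E C : Type*)
    [TopologicalSpace E] [CompactSpace E] [TopologicalSpace.MetrizableSpace E]
    [TotallyDisconnectedSpace E] [Nonempty E]
    [TopologicalSpace C] [CompactSpace C] [TopologicalSpace.MetrizableSpace C]
    [TotallyDisconnectedSpace C] [Nonempty C]
    (ψ : ℕ → E × C → ℝ)
    (h_nonneg : ∀ k p, 0 ≤ ψ k p)
    (h_usc : ∀ k, UpperSemicontinuous (ψ k))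
    (h_dense : ∀ e : E, Dense {t : C | ∀ k, ψ k (e, t) = 0}) :
    ∃ s : E → C, Continuous s ∧ ∀ (e : E) (k : ℕ), ψ k (e, s e) = 0 :=
  continuous_selector_abstract_general E C ψ h_nonneg h_usc h_dense
end

section
/- Let X be a compact metric space. For each k ∈ ℕ let m_k be a natural number, let x^{(k)}_1, …, x^{(k)}_{m_k} ∈ X, and let r_k : ℝ → ℝ be continuous and strictly increasing. Let C ⊆ ℝ be a nonempty compact perfect totally disconnected set, and let E be a nonempty compact totally disconnected subset of the space P(X) of Borel probability measures on X with the topology of weak convergence. Then there exists a continuous map s : E → C such that for every μ ∈ E and every k ∈ ℕ one has μ(⋃_{i=1}^{m_k} S(x^{(k)}_i, r_k(s(μ)))) = 0, where S(x, ρ) = {y ∈ X : d(x, y) = ρ}. -/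
/-!
In the weak topology, `(μ, ρ) ↦ μ (sphere x₀ ρ)` is upper semicontinuous (portmanteau), and
for fixed `μ` only finitely many radii carry mass `≥ 1 / N`. Hence each condition
`μ (sphere (x k i) (r k t)) < 1 / N` defines an open subset of `E × C` whose sections are cofinite
in the perfect set `C`, so dense. For compact zero-dimensional `E`, the maps `f ∈ C(E, C)` whose
graph lies in such a set form an open dense subset of the complete metric space `C(E, C)`
(density: glue locally constant corrections along a finite clopen cover), and the Baire category
theorem yields a map satisfying all countably many conditions at once.
-/

open MeasureTheory Metric Filter Set Topology
open scoped ENNReal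

theorem Perfect.perfectSpace_coe {α : Type*} [TopologicalSpace α] {C : Set α} (hC : Perfect C) :
    PerfectSpace C :=
  perfectSpace_iff_forall_not_isolated.2 fun t => nhds_ne_subtype_neBot_iff.2 (hC.acc t t.2)

namespace MeasureTheory.ProbabilityMeasure

theorem upperSemicontinuous_measure_of_isClosed {Ω : Type*} [MeasurableSpace Ω]
    [TopologicalSpace Ω] [OpensMeasurableSpace Ω] [HasOuterApproxClosed Ω] {F : Set Ω}
    (hF : IsClosed F) : UpperSemicontinuous fun μ : ProbabilityMeasure Ω => (μ : Measure Ω) F :=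
  fun _ _ hμ => eventually_lt_of_limsup_lt
    ((limsup_measure_closed_le_of_tendsto tendsto_id hF).trans_lt hμ)

variable {X : Type*} [MetricSpace X] [MeasurableSpace X] [OpensMeasurableSpace X]

theorem upperSemicontinuous_measure_singleton :
    UpperSemicontinuous fun p : ProbabilityMeasure X × X => (p.1 : Measure X) {p.2} := by
  rintro ⟨μ, y⟩ a (ha : (μ : Measure X) {y} < a)
  obtain ⟨δ, hδa, hδ⟩ : ∃ δ, (μ : Measure X) (cthickening δ {y}) < a ∧ 0 < δ :=
    (((tendsto_measure_cthickening_of_isClosed ⟨1, one_pos, measure_ne_top _ _⟩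
      isClosed_singleton).mono_left (nhdsWithin_le_nhds (s := Ioi 0))).eventually_lt_const ha).and
      self_mem_nhdsWithin |>.exists
  filter_upwards [(upperSemicontinuous_measure_of_isClosed isClosed_cthickening μ a hδa).prod_nhds
    (ball_mem_nhds y hδ)] with ⟨ν, z⟩ ⟨hν, hz⟩
  exact (measure_mono (singleton_subset_iff.2
    (mem_cthickening_of_dist_le z y δ {y} rfl (mem_ball.1 hz).le))).trans_lt hν

theorem upperSemicontinuous_measure_sphere (x₀ : X) :
    UpperSemicontinuous fun p : ProbabilityMeasure X × ℝ =>
      (p.1 : Measure X) (sphere x₀ p.2) := by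
  have hd : Continuous fun y => dist y x₀ := continuous_id.dist continuous_const
  convert upperSemicontinuous_measure_singleton.comp
    ((continuous_map hd).prodMap continuous_id) using 2 with p
  simp only [Function.comp_apply, Prod.map_fst, Prod.map_snd, id_eq, toMeasure_map,
    Measure.map_apply hd.measurable (measurableSet_singleton _)]
  rfl

end MeasureTheory.ProbabilityMeasure

section SphereMeasure

variable {X : Type*} [MetricSpace X] [MeasurableSpace X] [OpensMeasurableSpace X]

theorem finite_setOf_le_measure_sphere (μ : Measure X) [IsFiniteMeasure μ] (x₀ : X)
    {c : ℝ≥0∞} (hc : c ≠ 0) : {ρ : ℝ | c ≤ μ (sphere x₀ ρ)}.Finite :=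
  Measure.finite_const_le_meas_of_disjoint_iUnion μ (pos_iff_ne_zero.2 hc)
    (fun _ => isClosed_sphere.measurableSet)
    (fun _ _ h => disjoint_left.2 fun _ hy hy' => h (hy.symm.trans hy')) (measure_ne_top _ _)

theorem dense_setOf_measure_sphere_lt {T : Type*} [TopologicalSpace T] [T1Space T]
    [PerfectSpace T] (μ : Measure X) [IsFiniteMeasure μ] (x₀ : X) {r : T → ℝ}
    (hr : r.Injective) {c : ℝ≥0∞} (hc : c ≠ 0) :
    Dense {t | μ (sphere x₀ (r t)) < c} := by
  convert dense_univ.sdiff_finite ((finite_setOf_le_measure_sphere μ x₀ hc).preimage hr.injOn)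
    using 1
  ext t
  simp

end SphereMeasure

section Selection

variable {E Y : Type*} [TopologicalSpace E] [CompactSpace E] [MetricSpace Y] {G : Set (E × Y)}

theorem isOpen_setOf_forall_prodMk_mem (hG : IsOpen G) :
    IsOpen {f : C(E, Y) | ∀ x, (x, f x) ∈ G} := by
  have hB : IsClosed {p : E × C(E, Y) | (p.1, p.2 p.1) ∉ G} :=
    (hG.preimage (continuous_fst.prodMk (continuous_snd.eval continuous_fst))).isClosed_compl
  convert (isClosedMap_snd_of_compactSpace _ hB).isOpen_compl using 1
  ext f
  simp

theorem dense_setOf_forall_prodMk_mem [T2Space E] [TotallyDisconnectedSpace E] (hG : IsOpen G)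
    (hGd : ∀ x, Dense (Prod.mk x ⁻¹' G)) : Dense {f : C(E, Y) | ∀ x, (x, f x) ∈ G} := by
  classical
  refine Metric.dense_iff.2 fun f ε hε => ?_
  let P : Set E → Prop := fun S => ∃ K, IsClopen K ∧ S ⊆ K ∧
    ∃ g : C(E, Y), ∀ x ∈ K, dist (g x) (f x) < ε ∧ (x, g x) ∈ G
  have hP_mono : ∀ ⦃S T⦄, S ⊆ T → P T → P S := fun S T hST ⟨K, hK, hTK, g, hg⟩ =>
    ⟨K, hK, hST.trans hTK, g, hg⟩
  have hP_union : ∀ ⦃S T⦄, P S → P T → P (S ∪ T) := by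
    rintro S T ⟨K, hK, hSK, g, hg⟩ ⟨L, hL, hTL, h, hh⟩
    refine ⟨K ∪ L, hK.union hL, union_subset_union hSK hTL,
      ⟨K.piecewise g h, g.continuous.piecewise (fun x hx => by simp [hK.frontier_eq] at hx)
        h.continuous⟩, fun x hx => ?_⟩
    by_cases hxK : x ∈ K
    · simpa [hxK] using hg x hxK
    · simpa [hxK] using hh x (hx.resolve_left hxK)
  have hP_local : ∀ x ∈ univ, ∃ S ∈ 𝓝[univ] x, P S := by
    intro x _
    obtain ⟨y, hyG, hyf⟩ := (hGd x).exists_mem_open isOpen_ball (nonempty_ball.2 hε)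
    obtain ⟨U, V, hU, -, hxU, hyV, hUV⟩ := isOpen_prod_iff.1 hG x y hyG
    have hW : IsOpen (U ∩ {x' | dist y (f x') < ε}) :=
      hU.inter (isOpen_lt (continuous_const.dist f.continuous) continuous_const)
    obtain ⟨K, hK, hxK, hKW⟩ := compact_exists_isClopen_in_isOpen hW ⟨hxU, hyf⟩
    refine ⟨K, nhdsWithin_le_nhds (hK.isOpen.mem_nhds hxK), K, hK, subset_rfl,
      ContinuousMap.const E y, fun x' hx' => ⟨(hKW hx').2, hUV ⟨(hKW hx').1, hyV⟩⟩⟩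
  obtain ⟨K, -, hK, g, hg⟩ : P univ := isCompact_univ.induction_on
    ⟨∅, isClopen_empty, subset_rfl, f, by simp⟩ hP_mono hP_union hP_local
  exact ⟨g, (ContinuousMap.dist_lt_iff hε).2 fun x => (hg x (hK trivial)).1,
    fun x => (hg x (hK trivial)).2⟩

theorem exists_continuousMap_forall_prodMk_mem [T2Space E] [TotallyDisconnectedSpace E]
    [CompleteSpace Y] [Nonempty Y] {ι : Type*} [Countable ι] {G : ι → Set (E × Y)}
    (hG : ∀ i, IsOpen (G i)) (hGd : ∀ i x, Dense (Prod.mk x ⁻¹' G i)) :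
    ∃ f : C(E, Y), ∀ i x, (x, f x) ∈ G i := by
  have : Nonempty C(E, Y) := ⟨.const E (Classical.arbitrary Y)⟩
  obtain ⟨f, hf⟩ := (dense_iInter_of_isOpen (fun i => isOpen_setOf_forall_prodMk_mem (hG i))
    fun i => dense_setOf_forall_prodMk_mem (hG i) (hGd i)).nonempty
  exact ⟨f, mem_iInter.1 hf⟩

end Selection

theorem continuous_selector_concrete_general
    (X : Type*) [MetricSpace X]
    [MeasurableSpace X] [BorelSpace X]
    (m : ℕ → ℕ) (x : ∀ k : ℕ, Fin (m k) → X)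
    (r : ℕ → ℝ → ℝ) (hr_cont : ∀ k, Continuous (r k)) (hr_mono : ∀ k, StrictMono (r k))
    (C : Set ℝ) (hC_ne : C.Nonempty) (hC_compact : IsCompact C)
    (hC_perfect : Perfect C)
    (E : Set (ProbabilityMeasure X)) (hE_compact : IsCompact E)
    (hE_td : IsTotallyDisconnected E) :
    ∃ s : E → C, Continuous s ∧
      ∀ (μ : E) (k : ℕ),
        (μ : ProbabilityMeasure X)
          (⋃ i : Fin (m k), Metric.sphere (x k i) (r k (s μ))) = 0 := by
  have : CompactSpace E := isCompact_iff_compactSpace.1 hE_compact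
  have : TotallyDisconnectedSpace E := totallyDisconnectedSpace_subtype_iff.2 hE_td
  have : CompleteSpace C := hC_compact.isClosed.completeSpace_coe
  have : Nonempty C := hC_ne.to_subtype
  have : PerfectSpace C := hC_perfect.perfectSpace_coe
  let G : (Σ k, Fin (m k)) × ℕ → Set (E × C) := fun j =>
    {p | ((p.1 : ProbabilityMeasure X) : Measure X) (sphere (x j.1.1 j.1.2) (r j.1.1 p.2))
      < (j.2 : ℝ≥0∞)⁻¹}
  have hG_open : ∀ j, IsOpen (G j) := fun ⟨⟨k, i⟩, N⟩ => by
    have hφ : Continuous fun p : E × C => ((p.1 : ProbabilityMeasure X), r k p.2) := by fun_prop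
    exact UpperSemicontinuous.isOpen_preimage
      ((ProbabilityMeasure.upperSemicontinuous_measure_sphere (x k i)).comp hφ) _
  have hG_dense : ∀ j μ, Dense (Prod.mk μ ⁻¹' G j) := fun ⟨⟨k, i⟩, N⟩ μ =>
    dense_setOf_measure_sphere_lt ((μ : ProbabilityMeasure X) : Measure X) (x k i)
      ((hr_mono k).injective.comp Subtype.val_injective)
      (ENNReal.inv_ne_zero.2 (ENNReal.natCast_ne_top N))
  obtain ⟨s, hs⟩ := exists_continuousMap_forall_prodMk_mem hG_open hG_dense
  refine ⟨s, s.continuous, fun μ k => ?_⟩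
  rw [ProbabilityMeasure.null_iff_toMeasure_null]
  refine measure_iUnion_null fun i => ?_
  by_contra h
  obtain ⟨N, hN⟩ := ENNReal.exists_inv_nat_lt h
  exact (hs (⟨k, i⟩, N) μ).not_gt hN

/-- Concrete continuous selector lemma (Lemma 3.4): given, for each `k`, finitely
many centers and a continuous strictly increasing radius function `r_k`, a Cantor
set `C ⊆ ℝ` and a compact zero-dimensional set `E` of probability measures on `X`,
there is a continuous selector `s : E → C` such that for each `μ ∈ E` all unions of
spheres of radii `r_k(s(μ))` are `μ`-null. -/
theorem continuous_selector_concrete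
    (X : Type*) [MetricSpace X] [CompactSpace X]
    [MeasurableSpace X] [BorelSpace X]
    (m : ℕ → ℕ) (x : ∀ k : ℕ, Fin (m k) → X)
    (r : ℕ → ℝ → ℝ) (hr_cont : ∀ k, Continuous (r k)) (hr_mono : ∀ k, StrictMono (r k))
    (C : Set ℝ) (hC_ne : C.Nonempty) (hC_compact : IsCompact C)
    (hC_perfect : Perfect C) (hC_td : IsTotallyDisconnected C)
    (E : Set (ProbabilityMeasure X)) (hE_ne : E.Nonempty) (hE_compact : IsCompact E)
    (hE_td : IsTotallyDisconnected E) :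
    ∃ s : E → C, Continuous s ∧
      ∀ (μ : E) (k : ℕ),
        (μ : ProbabilityMeasure X)
          (⋃ i : Fin (m k), Metric.sphere (x k i) (r k (s μ))) = 0 :=
  continuous_selector_concrete_general X m x r hr_cont hr_mono C hC_ne hC_compact hC_perfect E
    hE_compact hE_td
end

section
/- Let X be a metrizable topological space and let (E_n)_{n≥1} be a sequence of compact totally disconnected subsets of X. Then there exists a sequence (F_n)_{n≥1} of compact subsets of X that are pairwise disjoint, satisfy ⋃_{n≥1} F_n = ⋃_{n≥1} E_n, and such that each F_n is contained in E_m for some m (depending on n). -/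
/-!
Since `E n` is closed, the piece `E n \ (E 0 ∪ ⋯ ∪ E (n-1))` of the disjointed sequence is a
relatively open subset of the compact metrizable zero-dimensional space `E n`, hence a countable
disjoint union of clopen, so compact, subsets of `E n`. Enumerating all these pieces over all `n`
gives the required sequence.
-/

open Set TopologicalSpace Function

theorem Pairwise.disjoint_uncurry {ι ι' α : Type*} {D : ι → ι' → Set α}
    (hrow : ∀ i, Pairwise (Disjoint on D i))
    (hcol : Pairwise (Disjoint on fun i => ⋃ j, D i j)) :
    Pairwise (Disjoint on fun p : ι × ι' => D p.1 p.2) := by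
  rintro ⟨i, j⟩ ⟨i', j'⟩ hne
  obtain rfl | hi := eq_or_ne i i'
  · exact hrow i fun hj => hne (Prod.ext rfl hj)
  · exact (hcol hi).mono (subset_iUnion (D i) j) (subset_iUnion (D i') j')

theorem IsClopen.disjointed {ι X : Type*} [Preorder ι] [LocallyFiniteOrderBot ι]
    [TopologicalSpace X] {f : ι → Set X} (hf : ∀ i, IsClopen (f i)) (i : ι) :
    IsClopen (disjointed f i) :=
  disjointedRec (fun _ j ht => ht.diff (hf j)) (hf i)

theorem IsOpen.exists_iUnion_eq_of_isClopen_basis {X : Type*} [TopologicalSpace X]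
    [SecondCountableTopology X] (hB : IsTopologicalBasis {s : Set X | IsClopen s})
    {U : Set X} (hU : IsOpen U) :
    ∃ D : ℕ → Set X, (∀ n, IsClopen (D n)) ∧ Pairwise (Disjoint on D) ∧ ⋃ n, D n = U := by
  obtain ⟨S, hSB, rfl⟩ := hB.open_eq_sUnion hU
  obtain ⟨T, hTc, hTS, hTU⟩ := isOpen_sUnion_countable S fun s hs => (hSB hs).isOpen
  obtain ⟨f, hf⟩ := (hTc.insert ∅).exists_eq_range (insert_nonempty _ _)
  have hf_clopen : ∀ n, IsClopen (f n) := by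
    intro n
    rcases (hf ▸ mem_range_self n : f n ∈ insert ∅ T) with h | h
    · exact h ▸ isClopen_empty
    · exact hSB (hTS h)
  refine ⟨disjointed f, IsClopen.disjointed hf_clopen, disjoint_disjointed f, ?_⟩
  rw [iUnion_disjointed, ← sUnion_range, ← hf, sUnion_insert, empty_union, hTU]

theorem IsCompact.exists_iUnion_eq_inter_of_isTotallyDisconnected {X : Type*}
    [TopologicalSpace X] [MetrizableSpace X] {E U : Set X} (hE : IsCompact E)
    (hE_td : IsTotallyDisconnected E) (hU : IsOpen U) :
    ∃ D : ℕ → Set X, (∀ n, IsCompact (D n)) ∧ Pairwise (Disjoint on D) ∧ ⋃ n, D n = E ∩ U := by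
  have : CompactSpace E := isCompact_iff_compactSpace.mp hE
  have : TotallyDisconnectedSpace E := totallyDisconnectedSpace_subtype_iff.mpr hE_td
  obtain ⟨D, hD_clopen, hD_disj, hD_union⟩ :=
    (hU.preimage continuous_subtype_val).exists_iUnion_eq_of_isClopen_basis
      (isTopologicalBasis_isClopen (X := E))
  refine ⟨fun n => Subtype.val '' D n, fun n => (hD_clopen n).isClosed.isCompact.image
    continuous_subtype_val, fun m n hmn => (disjoint_image_iff Subtype.val_injective).mpr
    (hD_disj hmn), ?_⟩
  rw [← image_iUnion, hD_union, Subtype.image_preimage_coe]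

/-- Lemma 4.2: a countable union of compact zero-dimensional subsets of a metrizable
space can be re-represented as a countable union of pairwise disjoint compact sets,
each contained in one of the original sets. -/
theorem sigma_compact_zero_dim_disjointification
    (X : Type*) [TopologicalSpace X] [TopologicalSpace.MetrizableSpace X]
    (E : ℕ → Set X)
    (hE_compact : ∀ n, IsCompact (E n))
    (hE_td : ∀ n, IsTotallyDisconnected (E n)) :
    ∃ F : ℕ → Set X,
      (∀ n, IsCompact (F n)) ∧
      (Pairwise fun n m => Disjoint (F n) (F m)) ∧
      (⋃ n, F n) = (⋃ n, E n) ∧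
      (∀ n, ∃ m, F n ⊆ E m) := by
  have h_open : ∀ n, IsOpen (⋂ j < n, (E j)ᶜ) := fun n =>
    (finite_lt_nat n).isOpen_biInter fun j _ => (hE_compact j).isClosed.isOpen_compl
  choose D hD_compact hD_disj hD_union using fun n =>
    (hE_compact n).exists_iUnion_eq_inter_of_isTotallyDisconnected (hE_td n) (h_open n)
  simp only [← disjointed_eq_inter_compl] at hD_union
  have hD_sub : ∀ n i, D n i ⊆ E n := fun n i =>
    (subset_iUnion (D n) i).trans ((hD_union n).subset.trans (disjointed_subset E n))
  let e : ℕ ≃ ℕ × ℕ := Nat.pairEquiv.symm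
  refine ⟨fun k => D (e k).1 (e k).2, fun k => hD_compact _ _, ?_, ?_,
    fun k => ⟨(e k).1, hD_sub _ _⟩⟩
  · have hcol : Pairwise (Disjoint on fun n => ⋃ i, D n i) := by
      simpa only [hD_union] using disjoint_disjointed E
    exact (Pairwise.disjoint_uncurry hD_disj hcol).comp_of_injective e.injective
  · rw [e.surjective.iUnion_comp (fun p => D p.1 p.2), iUnion_prod', iUnion_congr hD_union,
      iUnion_disjointed]
end

section
/- Let V be a real normed vector space, let K ⊆ V be convex, and let F ⊆ K be a convex face of K, i.e. F is convex and whenever a point of F lies in the open segment between two points of K, both of these points lie in F. Fix ε > 0 and define a set-valued map Θ on K by Θ(x) = {x} for x ∈ F, and Θ(x) = {y ∈ F : ‖x − y‖ < ε} for x ∈ K \ F. Then Θ is convex: for all x, y ∈ K and all α ∈ (0,1), the set {α·u + (1−α)·v : u ∈ Θ(x), v ∈ Θ(y)} is contained in Θ(α·x + (1−α)·y). -/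
/-!
`Θ x` is always a subset of `{u ∈ F | ‖x - u‖ < ε}`, and this bound is preserved by convex
combinations because the condition `‖x - u‖ < ε` is convex in the pair `(x, u)`. So if the
combination `z` of `x` and `y` lies outside `F`, the combination of `u ∈ Θ x` and `v ∈ Θ y`
lies in `Θ z`. If instead `z ∈ F`, then `x, y ∈ F` because `F` is a face, and all three sets
`Θ x`, `Θ y`, `Θ z` are singletons.
-/

theorem convex_setOf_norm_sub_lt {V : Type*} [SeminormedAddCommGroup V] [NormedSpace ℝ V]
    (ε : ℝ) : Convex ℝ {p : V × V | ‖p.1 - p.2‖ < ε} := by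
  simpa [Set.preimage] using
    (convex_ball (0 : V) ε).linear_preimage (LinearMap.fst ℝ V V - LinearMap.snd ℝ V V)

theorem subset_setOf_mem_and_norm_sub_lt {V : Type*} [SeminormedAddCommGroup V]
    {K F : Set V} {ε : ℝ} (hε : 0 < ε) {Θ : V → Set V}
    (hΘF : ∀ x ∈ F, Θ x = {x}) (hΘK : ∀ x ∈ K \ F, Θ x = {y ∈ F | ‖x - y‖ < ε})
    {x : V} (hx : x ∈ K) : Θ x ⊆ {y ∈ F | ‖x - y‖ < ε} := by
  by_cases hxF : x ∈ F
  · rw [hΘF x hxF, Set.singleton_subset_iff]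
    exact ⟨hxF, by simpa using hε⟩
  · exact (hΘK x ⟨hx, hxF⟩).le

/-- Convexity of the multifunction `Θ` from the proof of the retraction lemma
(Lemma 4.3): if `F` is a convex face of a convex set `K` in a normed space and
`Θ(x) = {x}` for `x ∈ F`, `Θ(x) = {y ∈ F : ‖x − y‖ < ε}` for `x ∈ K \ F`, then
`α·Θ(x) + (1−α)·Θ(y) ⊆ Θ(α·x + (1−α)·y)` for `x, y ∈ K` and `α ∈ (0,1)`. -/
theorem theta_multifunction_convex
    (V : Type*) [NormedAddCommGroup V] [NormedSpace ℝ V]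
    (K F : Set V) (hK : Convex ℝ K) (hF : Convex ℝ F) (hFK : IsExtreme ℝ K F)
    (ε : ℝ) (hε : 0 < ε)
    (Θ : V → Set V)
    (hΘF : ∀ x ∈ F, Θ x = {x})
    (hΘK : ∀ x ∈ K \ F, Θ x = {y ∈ F | ‖x - y‖ < ε}) :
    ∀ x ∈ K, ∀ y ∈ K, ∀ α : ℝ, 0 < α → α < 1 →
      Set.image2 (fun u v => α • u + (1 - α) • v) (Θ x) (Θ y)
        ⊆ Θ (α • x + (1 - α) • y) := by
  intro x hx y hy α hα hα1
  have hβ : 0 < 1 - α := by linarith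
  have hsum : α + (1 - α) = 1 := by ring
  set z := α • x + (1 - α) • y
  have hz : z ∈ openSegment ℝ x y := ⟨α, 1 - α, hα, hβ, hsum, rfl⟩
  rintro _ ⟨u, hu, v, hv, rfl⟩
  by_cases hzF : z ∈ F
  · rw [hΘF x (hFK.left_mem_of_mem_openSegment hx hy hzF hz), Set.mem_singleton_iff] at hu
    rw [hΘF y (hFK.right_mem_of_mem_openSegment hx hy hzF hz), Set.mem_singleton_iff] at hv
    rw [hΘF z hzF, hu, hv]
    rfl
  · obtain ⟨huF, hxu⟩ := subset_setOf_mem_and_norm_sub_lt hε hΘF hΘK hx hu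
    obtain ⟨hvF, hyv⟩ := subset_setOf_mem_and_norm_sub_lt hε hΘF hΘK hy hv
    rw [hΘK z ⟨hK hx hy hα.le hβ.le hsum, hzF⟩]
    exact ⟨hF huF hvF hα.le hβ.le hsum,
      convex_setOf_norm_sub_lt ε (x := (x, u)) (y := (y, v)) hxu hyv hα.le hβ.le hsum⟩
end

section
/- Let V be a Hausdorff locally convex real topological vector space, let K ⊆ V be a nonempty compact convex set, and let F ⊆ K be a closed convex face of K (i.e. F is convex and whenever a point of F lies in the open segment between two points of K, both of these points lie in F) with F ≠ K. Then F is nowhere dense in K; equivalently, every x ∈ F lies in the closure of K \ F. -/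
/-!
Pick `e ∈ K \ F`. For `x ∈ F`, every point of the open segment `(x, e)` lies in `K` by convexity
and outside `F`, since `F` is a face and `e ∉ F`. Letting the point tend to `x` along the segment
puts `x` in the closure of `K \ F`.
-/

open Set

section Face

variable {𝕜 E : Type*} {A B : Set E} {x y : E}

theorem IsExtreme.openSegment_subset_sdiff [Semiring 𝕜] [PartialOrder 𝕜] [AddCommMonoid E]
    [Module 𝕜 E] (hA : Convex 𝕜 A) (hAB : IsExtreme 𝕜 A B) (hx : x ∈ B) (hy : y ∈ A \ B) :
    openSegment 𝕜 x y ⊆ A \ B := fun _ hz =>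
  ⟨hA.segment_subset (hAB.subset hx) hy.1 (openSegment_subset_segment 𝕜 x y hz),
    fun hzB => hy.2 (hAB.right_mem_of_mem_openSegment (hAB.subset hx) hy.1 hzB hz)⟩

theorem IsExtreme.subset_closure_sdiff [AddCommGroup E] [Module ℝ E] [TopologicalSpace E]
    [ContinuousAdd E] [ContinuousSMul ℝ E] (hA : Convex ℝ A) (hAB : IsExtreme ℝ A B)
    (hne : B ≠ A) : B ⊆ closure (A \ B) := by
  obtain ⟨e, heA, heB⟩ := exists_of_ssubset (hAB.subset.ssubset_of_ne hne)
  intro x hx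
  exact closure_mono (hAB.openSegment_subset_sdiff hA hx ⟨heA, heB⟩)
    (segment_subset_closure_openSegment (left_mem_segment ℝ x e))

end Face

theorem proper_face_nowhere_dense_general
    (V : Type*) [AddCommGroup V] [Module ℝ V] [TopologicalSpace V]
    [IsTopologicalAddGroup V] [ContinuousSMul ℝ V]
    (K F : Set V)
    (hK_conv : Convex ℝ K)
    (hF_face : IsExtreme ℝ K F)
    (hF_ne : F ≠ K) :
    ∀ x ∈ F, x ∈ closure (K \ F) :=
  hF_face.subset_closure_sdiff hK_conv hF_ne

/-- Every proper closed face `F` of a nonempty compact convex set `K` in a Hausdorff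
locally convex real topological vector space is nowhere dense in `K`: every point of
`F` lies in the closure of `K \ F`. -/
theorem proper_face_nowhere_dense
    (V : Type*) [AddCommGroup V] [Module ℝ V] [TopologicalSpace V]
    [IsTopologicalAddGroup V] [ContinuousSMul ℝ V] [LocallyConvexSpace ℝ V] [T2Space V]
    (K F : Set V)
    (hK_ne : K.Nonempty) (hK_cpt : IsCompact K) (hK_conv : Convex ℝ K)
    (hF_closed : IsClosed F) (hF_conv : Convex ℝ F) (hF_face : IsExtreme ℝ K F)
    (hF_ne : F ≠ K) :
    ∀ x ∈ F, x ∈ closure (K \ F) :=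
  proper_face_nowhere_dense_general V K F hK_conv hF_face hF_ne
end

section
/- Let X and Y be compact metric spaces and π : X → Y a continuous surjection. Let ν be a Borel probability measure on Y, and suppose there is a Borel set D ⊆ Y with ν(D) = 0 such that for every y ∈ Y \ D the fiber π⁻¹({y}) is a singleton. Then there exists exactly one Borel probability measure μ on X with μ ∘ π⁻¹ = ν. -/
/-!
By Lusin–Souslin, the restriction of `π` to the Borel set `π ⁻¹' Dᶜ`, on which it is injective,
is a Borel isomorphism onto its image, so `π` has a Borel section `s` inverting it over `Dᶜ`.
Then `π ∘ s = id` holds `ν`-a.e., and `s ∘ π = id` holds `μ`-a.e. for every lift `μ` of `ν`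
because `μ (π ⁻¹' D) = ν D = 0`; hence `ν.map s` is a lift, and every lift equals it.
-/

open MeasureTheory Set

theorem exists_measurable_leftInvOn_of_injOn
    {X Y : Type*} [TopologicalSpace X] [PolishSpace X] [MeasurableSpace X] [BorelSpace X]
    [Nonempty X] [TopologicalSpace Y] [T2Space Y] [MeasurableSpace Y] [BorelSpace Y]
    {f : X → Y} {E : Set X} (hf : ContinuousOn f E) (hE : MeasurableSet E) (hinj : InjOn f E) :
    ∃ g : Y → X, Measurable g ∧ LeftInvOn g f E := by
  obtain ⟨g, hg, hgf⟩ := (hf.measurableEmbedding hE hinj).exists_measurable_extend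
    measurable_subtype_coe fun _ => ‹Nonempty X›
  exact ⟨g, hg, fun x hx => congrFun hgf ⟨x, hx⟩⟩

namespace MeasureTheory

variable {X Y : Type*} [MeasurableSpace X] [MeasurableSpace Y]

theorem Measure.map_map_of_comp_ae_eq_id {μ : Measure X} {f : X → Y} {g : Y → X}
    (hf : Measurable f) (hg : Measurable g) (hgf : g ∘ f =ᵐ[μ] id) :
    (μ.map f).map g = μ := by
  rw [Measure.map_map hg hf, Measure.map_congr hgf, Measure.map_id]

theorem existsUnique_map_eq_of_leftInvOn_of_rightInvOn {π : X → Y} {s : Y → X}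
    (hπ : Measurable π) (hs : Measurable s) {ν : Measure Y} [IsProbabilityMeasure ν]
    {D : Set Y} (hD : MeasurableSet D) (hD_null : ν D = 0)
    (hleft : LeftInvOn s π (π ⁻¹' Dᶜ)) (hright : RightInvOn s π Dᶜ) :
    ∃! μ : Measure X, IsProbabilityMeasure μ ∧ μ.map π = ν := by
  have hπs : π ∘ s =ᵐ[ν] id := (measure_eq_zero_iff_ae_notMem.1 hD_null).mono fun _ hy => hright hy
  refine ⟨ν.map s, ⟨Measure.isProbabilityMeasure_map hs.aemeasurable,
    Measure.map_map_of_comp_ae_eq_id hs hπ hπs⟩, ?_⟩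
  rintro μ ⟨-, rfl⟩
  have hμD : ∀ᵐ x ∂μ, π x ∉ D := by
    rw [Measure.map_apply hπ hD] at hD_null
    exact measure_eq_zero_iff_ae_notMem.1 hD_null
  exact (Measure.map_map_of_comp_ae_eq_id hπ hs (hμD.mono fun _ hx => hleft hx)).symm

end MeasureTheory

theorem unique_lift_of_ae_injective_factor_general
    (X : Type*) [MetricSpace X] [CompactSpace X] [MeasurableSpace X] [BorelSpace X]
    (Y : Type*) [MetricSpace Y] [MeasurableSpace Y] [BorelSpace Y]
    (π : X → Y) (hπ_cont : Continuous π) (hπ_surj : Function.Surjective π)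
    (ν : Measure Y) [IsProbabilityMeasure ν]
    (D : Set Y) (hD_meas : MeasurableSet D) (hD_null : ν D = 0)
    (h_fibers : ∀ y ∉ D, ∃ x : X, π ⁻¹' {y} = {x}) :
    ∃! μ : Measure X, IsProbabilityMeasure μ ∧ μ.map π = ν := by
  have := nonempty_of_isProbabilityMeasure ν
  have : Nonempty X := hπ_surj.nonempty
  have hinj : InjOn π (π ⁻¹' Dᶜ) := fun a ha b _ hab => by
    obtain ⟨x, hx⟩ := h_fibers (π a) ha
    have ha' : a ∈ π ⁻¹' {π a} := rfl
    have hb' : b ∈ π ⁻¹' {π a} := hab.symm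
    rw [hx] at ha' hb'
    exact ha'.trans hb'.symm
  obtain ⟨s, hs, hleft⟩ := exists_measurable_leftInvOn_of_injOn hπ_cont.continuousOn
    (hπ_cont.measurable hD_meas.compl) hinj
  have hright : RightInvOn s π Dᶜ := by
    simpa only [image_preimage_eq _ hπ_surj] using hleft.rightInvOn_image
  exact existsUnique_map_eq_of_leftInvOn_of_rightInvOn hπ_cont.measurable hs hD_meas hD_null
    hleft hright

/-- If `π : X → Y` is a continuous surjection between compact metric spaces which is
one-to-one off a `ν`-null Borel set `D` (fibers over `Y \ D` are singletons), then the
probability measure `ν` on `Y` has exactly one preimage under the pushforward map. -/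
theorem unique_lift_of_ae_injective_factor
    (X : Type*) [MetricSpace X] [CompactSpace X] [MeasurableSpace X] [BorelSpace X]
    (Y : Type*) [MetricSpace Y] [CompactSpace Y] [MeasurableSpace Y] [BorelSpace Y]
    (π : X → Y) (hπ_cont : Continuous π) (hπ_surj : Function.Surjective π)
    (ν : Measure Y) [IsProbabilityMeasure ν]
    (D : Set Y) (hD_meas : MeasurableSet D) (hD_null : ν D = 0)
    (h_fibers : ∀ y ∉ D, ∃ x : X, π ⁻¹' {y} = {x}) :
    ∃! μ : Measure X, IsProbabilityMeasure μ ∧ μ.map π = ν :=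
  unique_lift_of_ae_injective_factor_general X Y π hπ_cont hπ_surj ν D hD_meas hD_null h_fibers
end

section
/- Let X be a nonempty compact metrizable totally disconnected space and let T : X → X be a continuous map (not necessarily invertible) with no periodic points, i.e. the n-th iterate T^[n] satisfies T^[n](x) ≠ x for every x ∈ X and every integer n ≥ 1. Then for every integer n ≥ 1 there exist a clopen set F ⊆ X and an integer N ≥ 1 such that the preimages F, T⁻¹(F), …, T⁻⁽ⁿ⁻¹⁾(F) are pairwise disjoint and F ∪ T⁻¹(F) ∪ … ∪ T⁻⁽ᴺ⁻¹⁾(F) = X. -/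
/-!
Colour `X` by a continuous `ℓ : X → ℕ` with finitely many values such that `ℓ` takes distinct
values at `z, T z, …, T^[n-1] z`; aperiodicity and compactness of the zero-dimensional space make
this possible. Mark `z` when `ℓ (T^[n-1] z)` is strictly larger than every other value
`ℓ (T^[j] z)`, `j ≤ 2(n-1)`, i.e. when position `n-1` is a strict maximum of the colour sequence
of `z` on its window of radius `n-1`. Two such window maxima cannot lie within distance `n-1` of
each other, and along any orbit one reaches a window maximum after boundedly many moves to a
larger colour in the window, since there are only finitely many colours.
-/

open Set Function

section StrictWindowMax

variable {α : Type*} [Preorder α]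

def IsStrictWindowMax (a : ℕ → α) (r p : ℕ) : Prop :=
  ∀ j, j ≠ p → j ≤ p + r → p ≤ j + r → a j < a p

theorem IsStrictWindowMax.eq_of_le_add {a : ℕ → α} {r p q : ℕ} (hp : IsStrictWindowMax a r p)
    (hq : IsStrictWindowMax a r q) (hpq : p ≤ q + r) (hqp : q ≤ p + r) : p = q := by
  by_contra hne
  exact lt_asymm (hp q (Ne.symm hne) hqp hpq) (hq p hne hpq hqp)

theorem isStrictWindowMax_comp_add_iff {a : ℕ → α} {r i : ℕ} :
    IsStrictWindowMax (fun l => a (l + i)) r r ↔ IsStrictWindowMax a r (r + i) := by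
  constructor
  · intro h j hj hjr hrj
    obtain ⟨l, rfl⟩ : ∃ l, j = l + i := ⟨j - i, by omega⟩
    exact h l (by omega) (by omega) (by omega)
  · intro h l hl hlr hrl
    exact h (l + i) (by omega) (by omega) (by omega)

end StrictWindowMax

theorem exists_isStrictWindowMax_near {a : ℕ → ℕ} {r m : ℕ} (ha : ∀ i, a i < m)
    (hsep : ∀ i j, i < j → j ≤ i + r → a i ≠ a j) (k i : ℕ) (hk : m ≤ a i + k) :
    ∃ p, IsStrictWindowMax a r p ∧ i ≤ p + r * k ∧ p ≤ i + r * k := by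
  induction k generalizing i with
  | zero => exact absurd (ha i) (by omega)
  | succ k ih =>
    by_cases hi : IsStrictWindowMax a r i
    · exact ⟨i, hi, by omega, by omega⟩
    -- otherwise climb to a strictly larger colour within the window of `i`
    obtain ⟨j, hji, hj, hij, hle⟩ : ∃ j, j ≠ i ∧ j ≤ i + r ∧ i ≤ j + r ∧ a i ≤ a j := by
      simpa [IsStrictWindowMax] using hi
    have hlt : a i < a j := by
      rcases Nat.lt_or_gt_of_ne hji with h | h
      · exact lt_of_le_of_ne hle (hsep j i h hij).symm
      · exact lt_of_le_of_ne hle (hsep i j h hj)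
    obtain ⟨p, hp, hjp, hpj⟩ := ih j (by omega)
    exact ⟨p, hp, by rw [Nat.mul_succ]; omega, by rw [Nat.mul_succ]; omega⟩

section Marker

variable {X : Type*} {T : X → X}

def windowMaxMarker (ℓ : X → ℕ) (T : X → X) (r : ℕ) : Set X :=
  {z | IsStrictWindowMax (fun l => ℓ (T^[l] z)) r r}

theorem iterate_mem_windowMaxMarker_iff {ℓ : X → ℕ} {r i : ℕ} {x : X} :
    T^[i] x ∈ windowMaxMarker ℓ T r ↔ IsStrictWindowMax (fun l => ℓ (T^[l] x)) r (r + i) := by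
  simp only [windowMaxMarker, mem_ofPred_eq, ← iterate_add_apply]
  exact isStrictWindowMax_comp_add_iff (a := fun l => ℓ (T^[l] x))

theorem exists_iterate_mem_windowMaxMarker {ℓ : X → ℕ} {r m : ℕ} (hℓm : ∀ z, ℓ z < m)
    (hℓT : ∀ z k, 1 ≤ k → k ≤ r → ℓ (T^[k] z) ≠ ℓ z) (x : X) :
    ∃ q ≤ 2 * r * m, T^[q] x ∈ windowMaxMarker ℓ T r := by
  have hsep : ∀ i j, i < j → j ≤ i + r → ℓ (T^[i] x) ≠ ℓ (T^[j] x) := by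
    intro i j hij hjr
    rw [show j = (j - i) + i by omega, iterate_add_apply]
    exact (hℓT _ (j - i) (by omega) (by omega)).symm
  obtain ⟨p, hp, hlo, hhi⟩ :=
    exists_isStrictWindowMax_near (fun i => hℓm _) hsep m (r * m + r) (by omega)
  refine ⟨p - r, by rw [Nat.mul_assoc]; omega, ?_⟩
  rw [iterate_mem_windowMaxMarker_iff, show r + (p - r) = p by omega]
  exact hp

end Marker

section Clopen

variable {X : Type*} [TopologicalSpace X]

theorem continuous_nat_find {P : ℕ → X → Prop} [∀ z, DecidablePred (P · z)]
    (hP : ∀ k, IsClopen {z | P k z}) (hex : ∀ z, ∃ k, P k z) :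
    Continuous fun z => Nat.find (hex z) := by
  refine continuous_discrete_rng.mpr fun k => ?_
  have hfiber : (fun z => Nat.find (hex z)) ⁻¹' {k} =
      {z | P k z} ∩ ⋂ j ∈ Finset.range k, {z | P j z}ᶜ := by
    ext z
    simp [Nat.find_eq_iff]
  rw [hfiber]
  exact (hP k).isOpen.inter (isOpen_biInter_finset fun j _ => (hP j).compl.isOpen)

theorem exists_continuous_nat_fiberwise_subset [CompactSpace X] {U : X → Set X}
    (hU : ∀ x, IsClopen (U x)) (hxU : ∀ x, x ∈ U x) :
    ∃ (ℓ : X → ℕ) (m : ℕ), Continuous ℓ ∧ (∀ z, ℓ z < m) ∧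
      ∀ z w, ℓ z = ℓ w → ∃ x, z ∈ U x ∧ w ∈ U x := by
  classical
  obtain ⟨t, ht⟩ := isCompact_univ.elim_finite_subcover U (fun x => (hU x).isOpen)
    fun z _ => mem_iUnion.mpr ⟨z, hxU z⟩
  let s := t.toList
  let P : ℕ → X → Prop := fun k z => ∃ x ∈ s[k]?, z ∈ U x
  have hP : ∀ k, IsClopen {z | P k z} := by
    intro k
    cases h : s[k]? with
    | none => simpa [P, h] using isClopen_empty
    | some x => simpa [P, h] using hU x
  have hex : ∀ z, ∃ k, P k z := by
    intro z
    obtain ⟨x, hxt, hzx⟩ := mem_iUnion₂.mp (ht (mem_univ z))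
    obtain ⟨k, hk⟩ := List.mem_iff_getElem?.mp (Finset.mem_toList.mpr hxt)
    exact ⟨k, x, hk, hzx⟩
  refine ⟨fun z => Nat.find (hex z), s.length, continuous_nat_find hP hex, fun z => ?_, ?_⟩
  · obtain ⟨x, hx, -⟩ := Nat.find_spec (hex z)
    by_contra hlen
    simp [List.getElem?_eq_none (not_lt.mp hlen)] at hx
  · intro z w hzw
    obtain ⟨x, hx, hzx⟩ := Nat.find_spec (hex z)
    obtain ⟨y, hy, hwy⟩ := Nat.find_spec (hex w)
    have hxy : x = y := Option.mem_unique hx (by simpa only [hzw] using hy)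
    exact ⟨x, hzx, hxy ▸ hwy⟩

variable {T : X → X}

theorem exists_isClopen_mem_disjoint_preimage_iterate [TotallySeparatedSpace X]
    (hT : Continuous T) {x : X} {r : ℕ} (hx : ∀ k, 1 ≤ k → k ≤ r → T^[k] x ≠ x) :
    ∃ U, IsClopen U ∧ x ∈ U ∧ ∀ k, 1 ≤ k → k ≤ r → Disjoint U (T^[k] ⁻¹' U) := by
  have hV : ∀ k, ∃ V : Set X, IsClopen V ∧ x ∈ V ∧ (1 ≤ k → k ≤ r → T^[k] x ∉ V) := by
    intro k
    by_cases hk : 1 ≤ k ∧ k ≤ r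
    · obtain ⟨V, hV, hxV, hkV⟩ := exists_isClopen_of_totally_separated (hx k hk.1 hk.2).symm
      exact ⟨V, hV, hxV, fun _ _ => hkV⟩
    · exact ⟨univ, isClopen_univ, mem_univ x, fun h1 h2 => absurd ⟨h1, h2⟩ hk⟩
  choose V hVclopen hxV hTV using hV
  refine ⟨⋂ k ∈ Finset.Icc 1 r, V k ∩ T^[k] ⁻¹' (V k)ᶜ,
    isClopen_biInter_finset fun k _ => (hVclopen k).inter ((hVclopen k).compl.preimage
      (hT.iterate k)), ?_, ?_⟩
  · simp only [mem_iInter₂, Finset.mem_Icc]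
    exact fun k hk => ⟨hxV k, hTV k hk.1 hk.2⟩
  · intro k hk1 hkr
    refine disjoint_left.mpr fun z hz hTz => ?_
    have hk : k ∈ Finset.Icc 1 r := Finset.mem_Icc.mpr ⟨hk1, hkr⟩
    exact (mem_iInter₂.mp hz k hk).2 (mem_iInter₂.mp hTz k hk).1

theorem exists_continuous_coloring_of_iterate_ne [CompactSpace X] [TotallySeparatedSpace X]
    (hT : Continuous T) {r : ℕ} (hT_aper : ∀ x k, 1 ≤ k → k ≤ r → T^[k] x ≠ x) :
    ∃ (ℓ : X → ℕ) (m : ℕ), Continuous ℓ ∧ (∀ z, ℓ z < m) ∧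
      ∀ z k, 1 ≤ k → k ≤ r → ℓ (T^[k] z) ≠ ℓ z := by
  choose U hU hxU hUT using fun x =>
    exists_isClopen_mem_disjoint_preimage_iterate hT (hT_aper x)
  obtain ⟨ℓ, m, hℓ, hℓm, hℓU⟩ := exists_continuous_nat_fiberwise_subset hU hxU
  refine ⟨ℓ, m, hℓ, hℓm, fun z k hk1 hkr hzk => ?_⟩
  obtain ⟨x, hTz, hz⟩ := hℓU _ _ hzk
  exact disjoint_left.mp (hUT x k hk1 hkr) hz hTz

theorem isClopen_windowMaxMarker {ℓ : X → ℕ} (hℓ : Continuous ℓ) (hT : Continuous T) (r : ℕ) :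
    IsClopen (windowMaxMarker ℓ T r) := by
  have hmarker : windowMaxMarker ℓ T r =
      ⋂ j ∈ Finset.range (2 * r + 1), {z | j ≠ r → ℓ (T^[j] z) < ℓ (T^[r] z)} := by
    ext z
    simp only [windowMaxMarker, IsStrictWindowMax, mem_ofPred_eq, mem_iInter₂, Finset.mem_range]
    exact ⟨fun h j _ hj => h j hj (by omega) (by omega),
      fun h j hj hjr _ => h j (by omega) hj⟩
  rw [hmarker]
  refine isClopen_biInter_finset fun j _ => ?_
  have hpair : Continuous fun z => (ℓ (T^[j] z), ℓ (T^[r] z)) :=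
    (hℓ.comp (hT.iterate j)).prodMk (hℓ.comp (hT.iterate r))
  exact (isClopen_discrete {q : ℕ × ℕ | j ≠ r → q.1 < q.2}).preimage hpair

end Clopen

theorem krieger_marker_lemma_noninvertible_general
    (X : Type*) [TopologicalSpace X] [CompactSpace X]
    [TopologicalSpace.MetrizableSpace X] [TotallyDisconnectedSpace X]
    (T : X → X) (hT : Continuous T)
    (h_aper : ∀ (x : X) (n : ℕ), 1 ≤ n → T^[n] x ≠ x)
    (n : ℕ) :
    ∃ (F : Set X) (N : ℕ), IsClopen F ∧ 1 ≤ N ∧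
      (∀ i j, i < n → j < n → i ≠ j →
        Disjoint (T^[i] ⁻¹' F) (T^[j] ⁻¹' F)) ∧
      (⋃ i < N, T^[i] ⁻¹' F) = Set.univ := by
  obtain ⟨ℓ, m, hℓ, hℓm, hℓT⟩ :=
    exists_continuous_coloring_of_iterate_ne hT (r := n - 1) fun x k hk _ => h_aper x k hk
  refine ⟨windowMaxMarker ℓ T (n - 1), 2 * (n - 1) * m + 1, isClopen_windowMaxMarker hℓ hT _,
    le_add_self, fun i j hi hj hij => disjoint_left.mpr fun x hxi hxj => hij ?_, ?_⟩
  · rw [mem_preimage, iterate_mem_windowMaxMarker_iff] at hxi hxj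
    have := hxi.eq_of_le_add hxj (by omega) (by omega)
    omega
  · refine eq_univ_of_forall fun x => ?_
    obtain ⟨q, hq, hqx⟩ := exists_iterate_mem_windowMaxMarker hℓm hℓT x
    exact mem_iUnion₂.mpr ⟨q, Nat.lt_succ_of_le hq, hqx⟩

/-- Krieger's Marker Lemma, noninvertible case: if `T` is a continuous aperiodic
map of a nonempty compact metrizable totally disconnected space, then for every
`n ≥ 1` there are a clopen set `F` and an `N ≥ 1` such that the preimages
`F, T⁻¹F, …, T⁻⁽ⁿ⁻¹⁾F` are pairwise disjoint and `F ∪ T⁻¹F ∪ … ∪ T⁻⁽ᴺ⁻¹⁾F = X`. -/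
theorem krieger_marker_lemma_noninvertible
    (X : Type*) [TopologicalSpace X] [CompactSpace X]
    [TopologicalSpace.MetrizableSpace X] [TotallyDisconnectedSpace X] [Nonempty X]
    (T : X → X) (hT : Continuous T)
    (h_aper : ∀ (x : X) (n : ℕ), 1 ≤ n → T^[n] x ≠ x)
    (n : ℕ) (hn : 1 ≤ n) :
    ∃ (F : Set X) (N : ℕ), IsClopen F ∧ 1 ≤ N ∧
      (∀ i j, i < n → j < n → i ≠ j →
        Disjoint (T^[i] ⁻¹' F) (T^[j] ⁻¹' F)) ∧
      (⋃ i < N, T^[i] ⁻¹' F) = Set.univ :=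
  krieger_marker_lemma_noninvertible_general X T hT h_aper n
end
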